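/- In the group N of 4x4 real lower unitriangular matrices, with n(z,y_1,y_2,x_1,x_2,x_3) \in \mathfrak{n} as above, the following multiplication formula holds: \exp(u X_1 + v X_3) \cdot \exp(n(z,y_1,y_2,x_1,x_2,x_3)) = \exp(n(z', y_1', y_2', 0, x_2, 0)) \cdot \exp((u+x_1) X_1 + (v+x_3) X_3), where y_1' = y_1 - u x_2 - x_1 x_2/2, y_2' = y_2 + v x_2 + x_2 x_3/2, and z' = z + v y_1 - u y_2 + (1/2) x_3 y_1 - (1/2) x_1 y_2 - u v x_2 - (1/2) v x_1 x_2 - (1/2) u x_2 x_3 - (1/3) x_1 x_2 x_3. -/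

import Mathlib

/-!
Every `n(z,y₁,y₂,x₁,x₂,x₃)` is strictly lower triangular, so its fourth power vanishes and its
exponential is the cubic polynomial `1 + n + n²/2 + n³/6`, an explicit unitriangular matrix.
Both `exp(uX₁ + vX₃)` and `exp((u+x₁)X₁ + (v+x₃)X₃)` are of this form, so the formula reduces to
a polynomial identity between the entries of two products of explicit matrices.
-/

open Matrix

/-- Elementary 4×4 real matrix. -/
def E (i j : Fin 4) : Matrix (Fin 4) (Fin 4) ℝ := Matrix.single i j 1

/-- `n(z,y₁,y₂,x₁,x₂,x₃) = zZ + y₁Y₁ + y₂Y₂ + x₁X₁ + x₂X₂ + x₃X₃` with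
`X₁ = E₂₁, X₂ = E₃₂, X₃ = E₄₃, Y₁ = E₃₁, Y₂ = E₄₂, Z = E₄₁`. -/
def nmat (z y₁ y₂ x₁ x₂ x₃ : ℝ) : Matrix (Fin 4) (Fin 4) ℝ :=
  x₁ • E 1 0 + x₂ • E 2 1 + x₃ • E 3 2 + y₁ • E 2 0 + y₂ • E 3 1 + z • E 3 0

open Finset in
open scoped Nat in
theorem NormedSpace.exp_eq_sum_range_of_pow_eq_zero {𝕂 𝔸 : Type*} [Field 𝕂] [CharZero 𝕂]
    [Ring 𝔸] [Algebra 𝕂 𝔸] [TopologicalSpace 𝔸] [IsTopologicalRing 𝔸] {a : 𝔸} {k : ℕ}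
    (h : a ^ k = 0) : exp a = ∑ i ∈ range k, (i !⁻¹ : 𝕂) • a ^ i := by
  rw [exp_eq_tsum 𝕂]
  refine tsum_eq_sum fun i hi => ?_
  rw [pow_eq_zero_of_le (by simpa using hi) h, smul_zero]

lemma nmat_pow_four (z y₁ y₂ x₁ x₂ x₃ : ℝ) : nmat z y₁ y₂ x₁ x₂ x₃ ^ 4 = 0 := by
  ext i j
  fin_cases i <;> fin_cases j <;>
    simp [pow_succ, mul_apply, Fin.sum_univ_four, nmat, E, single]

lemma exp_nmat (z y₁ y₂ x₁ x₂ x₃ : ℝ) :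
    NormedSpace.exp (nmat z y₁ y₂ x₁ x₂ x₃) =
      !![1, 0, 0, 0;
         x₁, 1, 0, 0;
         y₁ + x₁ * x₂ / 2, x₂, 1, 0;
         z + (x₁ * y₂ + x₃ * y₁) / 2 + x₁ * x₂ * x₃ / 6, y₂ + x₂ * x₃ / 2, x₃, 1] := by
  rw [NormedSpace.exp_eq_sum_range_of_pow_eq_zero (𝕂 := ℝ) (nmat_pow_four ..)]
  ext i j
  fin_cases i <;> fin_cases j <;>
    simp [Finset.sum_range_succ, pow_succ, mul_apply, Fin.sum_univ_four, nmat, E, single] <;>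
    ring

lemma smul_add_smul_eq_nmat (u v : ℝ) : u • E 1 0 + v • E 3 2 = nmat 0 0 0 u 0 v := by
  simp [nmat]

/-- Multiplication formula in the lower unitriangular group `N`:
`exp(uX₁ + vX₃)·exp(n(z,y₁,y₂,x₁,x₂,x₃)) = exp(n(z',y₁',y₂',0,x₂,0))·exp((u+x₁)X₁ + (v+x₃)X₃)`. -/
theorem mult_formula_case_I (u v z y₁ y₂ x₁ x₂ x₃ : ℝ) :
    NormedSpace.exp (u • E 1 0 + v • E 3 2) *
        NormedSpace.exp (nmat z y₁ y₂ x₁ x₂ x₃)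
      = NormedSpace.exp (nmat
            (z + v * y₁ - u * y₂ + (1/2) * x₃ * y₁ - (1/2) * x₁ * y₂ - u * v * x₂
              - (1/2) * v * x₁ * x₂ - (1/2) * u * x₂ * x₃ - (1/3) * x₁ * x₂ * x₃)
            (y₁ - u * x₂ - x₁ * x₂ / 2)
            (y₂ + v * x₂ + x₂ * x₃ / 2)
            0 x₂ 0) *
        NormedSpace.exp ((u + x₁) • E 1 0 + (v + x₃) • E 3 2) := by
  simp only [smul_add_smul_eq_nmat, exp_nmat]
  ext i j
  fin_cases i <;> fin_cases j <;>
    simp [mul_apply, Fin.sum_univ_four] <;> ring
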